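/- arXiv:1605.07016 — 4 statements merged into one kernel-verified Lean document; each statement's English description precedes it below -/
import Mathlib

section
/- Let G be a connected graph of order n ≥ 3 and v a vertex of G. Then D(G) − 1 ≤ D(G − v) ≤ 2·D(G), where G − v is the graph obtained by deleting v and all edges incident to v. -/
open SimpleGraph

/-- Distinguishing number: least `d` admitting a vertex labeling with `d` labels
preserved only by the identity automorphism. -/
noncomputable def distNum {V : Type*} (G : SimpleGraph V) : ℕ :=
  sInf {d : ℕ | ∃ f : V → Fin d,
    ∀ φ : G ≃g G, (∀ x : V, f (φ x) = f x) → ∀ x : V, φ x = x}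

/-- Distinguishing index: least `d` admitting an edge coloring with `d` colors
preserved only by the identity automorphism. -/
noncomputable def distIdx {V : Type*} (G : SimpleGraph V) : ℕ :=
  sInf {d : ℕ | ∃ f : Sym2 V → Fin d,
    ∀ φ : G ≃g G, (∀ e ∈ G.edgeSet, f (Sym2.map φ e) = f e) → ∀ x : V, φ x = x}

/-- `G ⊙ v`: remove all edges joining two neighbors of `v`. -/
def SimpleGraph.odot {V : Type*} (G : SimpleGraph V) (v : V) : SimpleGraph V :=
  G.deleteEdges {e | ∀ x ∈ e, G.Adj v x}

/-- Vertex contraction `G ∘ v`: delete `v` and put a clique on its neighborhood. -/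
def SimpleGraph.vContract {V : Type*} (G : SimpleGraph V) (v : V) :
    SimpleGraph {u : V // u ≠ v} where
  Adj x y := x ≠ y ∧ (G.Adj x.1 y.1 ∨ (G.Adj v x.1 ∧ G.Adj v y.1))
  symm := by
    constructor
    rintro x y ⟨h1, h2 | ⟨h3, h4⟩⟩
    exacts [⟨h1.symm, Or.inl h2.symm⟩, ⟨h1.symm, Or.inr ⟨h4, h3⟩⟩]
  loopless := ⟨fun x h => h.1 rfl⟩

/-- Edge contraction `G ∘ e` for `e = uv`: merge `v` into `u`. -/
def SimpleGraph.eContract {V : Type*} (G : SimpleGraph V) (u v : V) :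
    SimpleGraph {x : V // x ≠ v} where
  Adj x y := x ≠ y ∧ (G.Adj x.1 y.1 ∨ (x.1 = u ∧ G.Adj v y.1) ∨ (y.1 = u ∧ G.Adj v x.1))
  symm := by
    constructor
    rintro x y ⟨h1, h2⟩
    refine ⟨h1.symm, ?_⟩
    rcases h2 with h | ⟨ha, hb⟩ | ⟨ha, hb⟩
    · exact Or.inl h.symm
    · exact Or.inr (Or.inr ⟨ha, hb⟩)
    · exact Or.inr (Or.inl ⟨ha, hb⟩)
  loopless := ⟨fun x h => h.1 rfl⟩

/-- The star `K_{1,n}`. -/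
def starG (n : ℕ) : SimpleGraph (Fin 1 ⊕ Fin n) := completeBipartiteGraph (Fin 1) (Fin n)

/-- The friendship graph `F_n = K_1 + n K_2`; `none` is the central vertex. -/
def friendshipGraph (n : ℕ) : SimpleGraph (Option (Fin n × Fin 2)) where
  Adj x y := x ≠ y ∧ (x = none ∨ y = none ∨ ∃ i a b, x = some (i, a) ∧ y = some (i, b))
  symm := by
    constructor
    rintro x y ⟨h1, h2⟩
    refine ⟨h1.symm, ?_⟩
    rcases h2 with h | h | ⟨i, a, b, hx, hy⟩
    · exact Or.inr (Or.inl h)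
    · exact Or.inl h
    · exact Or.inr (Or.inr ⟨i, b, a, hy, hx⟩)
  loopless := ⟨fun x h => h.1 rfl⟩

/-- `K_1 + (K_2 ∪ (n-2) K_1)` on `Fin (n+1)`: vertex `0` is the join apex,
vertices `1, 2` form the `K_2`, the rest are the isolated vertices. -/
def joinGraph (n : ℕ) : SimpleGraph (Fin (n + 1)) where
  Adj x y := x ≠ y ∧ (x = 0 ∨ y = 0 ∨ ((x = 1 ∨ x = 2) ∧ (y = 1 ∨ y = 2)))
  symm := by constructor; rintro x y ⟨h1, h2⟩; exact ⟨h1.symm, by tauto⟩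
  loopless := ⟨fun x h => h.1 rfl⟩

/-!
Automorphisms of `G` fixing `v` restrict to automorphisms of `G - v`, and automorphisms of
`G - v` preserving the neighbourhood of `v` extend to `G`. Hence a distinguishing labeling of
`G - v` plus a fresh label on `v` distinguishes `G`, and a distinguishing labeling of `G`,
refined by adjacency to `v`, distinguishes `G - v`. If either graph has no distinguishing
labeling with finitely many labels, neither has, and both numbers are `0`.
-/

namespace SimpleGraph

variable {V : Type*} {G : SimpleGraph V}

def IsDistinguishing {α : Type*} (G : SimpleGraph V) (f : V → α) : Prop :=
  ∀ φ : G ≃g G, (∀ x, f (φ x) = f x) → ∀ x, φ x = x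

lemma IsDistinguishing.comp_injective {α β : Type*} {f : V → α} (hf : G.IsDistinguishing f)
    {e : α → β} (he : e.Injective) : G.IsDistinguishing (e ∘ f) :=
  fun φ hφ => hf φ fun x => he (hφ x)

lemma distNum_le_card_of_isDistinguishing {α : Type*} [Fintype α] {f : V → α}
    (hf : G.IsDistinguishing f) : distNum G ≤ Fintype.card α :=
  Nat.sInf_le (⟨_, hf.comp_injective (Fintype.equivFin α).injective⟩ :
    Fintype.card α ∈ {d | ∃ f : V → Fin d, G.IsDistinguishing f})

lemma exists_isDistinguishing_fin_distNum {α : Type*} [Fintype α] {f : V → α}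
    (hf : G.IsDistinguishing f) : ∃ g : V → Fin (distNum G), G.IsDistinguishing g :=
  Nat.sInf_mem (⟨_, _, hf.comp_injective (Fintype.equivFin α).injective⟩ :
    {d | ∃ f : V → Fin d, G.IsDistinguishing f}.Nonempty)

lemma distNum_eq_zero_of_not_exists_isDistinguishing
    (h : ¬ ∃ (d : ℕ) (f : V → Fin d), G.IsDistinguishing f) : distNum G = 0 := by
  refine (congrArg sInf (Set.eq_empty_of_forall_notMem ?_)).trans Nat.sInf_empty
  exact fun d hd => h ⟨d, hd⟩

variable {v : V}

def Iso.restrictDelete (φ : G ≃g G) (hv : φ v = v) :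
    G.induce {u | u ≠ v} ≃g G.induce {u | u ≠ v} where
  toEquiv := Equiv.Perm.subtypePerm φ.toEquiv fun _ => φ.injective.ne_iff' hv
  map_rel_iff' := φ.map_rel_iff

section extendDelete

variable (ψ : G.induce {u | u ≠ v} ≃g G.induce {u | u ≠ v})

open Classical in
noncomputable def Iso.extendDelete (hN : ∀ u, G.Adj v (ψ u) ↔ G.Adj v u) : G ≃g G where
  toEquiv := Equiv.Perm.ofSubtype ψ.toEquiv
  map_rel_iff' {a b} := by
    have hne {u : V} (hu : u ≠ v) : Equiv.Perm.ofSubtype ψ.toEquiv u = ψ ⟨u, hu⟩ :=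
      Equiv.Perm.ofSubtype_apply_of_mem ψ.toEquiv (p := (· ∈ {u | u ≠ v})) hu
    have hv : Equiv.Perm.ofSubtype ψ.toEquiv v = v :=
      Equiv.Perm.ofSubtype_apply_of_not_mem ψ.toEquiv (p := (· ∈ {u | u ≠ v})) (by simp)
    change G.Adj (Equiv.Perm.ofSubtype ψ.toEquiv a) (Equiv.Perm.ofSubtype ψ.toEquiv b) ↔ G.Adj a b
    by_cases ha : a = v <;> by_cases hb : b = v
    · simp [ha, hb]
    · rw [ha, hv, hne hb]
      exact hN ⟨b, hb⟩
    · rw [hb, hv, hne ha, G.adj_comm, G.adj_comm a]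
      exact hN ⟨a, ha⟩
    · rw [hne ha, hne hb]
      exact ψ.map_rel_iff

lemma Iso.extendDelete_apply_of_ne (hN : ∀ u, G.Adj v (ψ u) ↔ G.Adj v u) {u : V} (hu : u ≠ v) :
    ψ.extendDelete hN u = ψ ⟨u, hu⟩ := by
  classical
  exact Equiv.Perm.ofSubtype_apply_of_mem ψ.toEquiv (p := (· ∈ {u | u ≠ v})) hu

lemma Iso.extendDelete_apply_self (hN : ∀ u, G.Adj v (ψ u) ↔ G.Adj v u) :
    ψ.extendDelete hN v = v := by
  classical
  exact Equiv.Perm.ofSubtype_apply_of_not_mem ψ.toEquiv (p := (· ∈ {u | u ≠ v})) (by simp)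

end extendDelete

lemma IsDistinguishing.extend_none [DecidableEq V] {α : Type*} {g : {u | u ≠ v} → α}
    (hg : (G.induce {u | u ≠ v}).IsDistinguishing g) :
    G.IsDistinguishing fun u => if h : u = v then none else some (g ⟨u, h⟩) := by
  intro φ hφ
  have hv : φ v = v := by
    by_contra h
    simpa [h] using hφ v
  have hres : ∀ u, φ.restrictDelete hv u = u := hg _ fun u => by
    have hu : (u : V) ≠ v := u.2
    have hφu : φ u ≠ v := (φ.restrictDelete hv u).2
    have := hφ u
    simp only [dif_neg hu, dif_neg hφu] at this
    exact Option.some_injective _ this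
  intro x
  by_cases hx : x = v
  · rw [hx, hv]
  · exact congrArg Subtype.val (hres ⟨x, hx⟩)

lemma IsDistinguishing.restrict_adj {α : Type*} {f : V → α} (hf : G.IsDistinguishing f) :
    (G.induce {u | u ≠ v}).IsDistinguishing fun u => (G.Adj v u, f u) := by
  intro ψ hψ
  have hN : ∀ u, G.Adj v (ψ u) ↔ G.Adj v u := fun u => Iff.of_eq (congrArg Prod.fst (hψ u))
  have hext : ∀ x, ψ.extendDelete hN x = x := hf _ fun x => by
    by_cases hx : x = v
    · rw [hx, Iso.extendDelete_apply_self]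
    · rw [Iso.extendDelete_apply_of_ne _ _ hx]
      exact congrArg Prod.snd (hψ ⟨x, hx⟩)
  intro u
  ext
  rw [← Iso.extendDelete_apply_of_ne ψ hN u.2]
  exact hext u

lemma distNum_le_distNum_induce_ne_add_one :
    distNum G ≤ distNum (G.induce {u | u ≠ v}) + 1 := by
  classical
  by_cases h : ∃ (d : ℕ) (f : V → Fin d), G.IsDistinguishing f
  · obtain ⟨d, f, hf⟩ := h
    obtain ⟨g, hg⟩ := exists_isDistinguishing_fin_distNum (hf.restrict_adj (v := v))
    simpa using distNum_le_card_of_isDistinguishing hg.extend_none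
  · simp [distNum_eq_zero_of_not_exists_isDistinguishing h]

lemma distNum_induce_ne_le_two_mul :
    distNum (G.induce {u | u ≠ v}) ≤ 2 * distNum G := by
  classical
  by_cases h : ∃ (d : ℕ) (g : {u | u ≠ v} → Fin d), (G.induce {u | u ≠ v}).IsDistinguishing g
  · obtain ⟨d, g, hg⟩ := h
    obtain ⟨f, hf⟩ := exists_isDistinguishing_fin_distNum hg.extend_none
    simpa using distNum_le_card_of_isDistinguishing (hf.restrict_adj (v := v))
  · simp [distNum_eq_zero_of_not_exists_isDistinguishing h]

end SimpleGraph

theorem stmt0_general {V : Type*} (G : SimpleGraph V) (v : V) :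
    distNum G - 1 ≤ distNum (G.induce {u | u ≠ v}) ∧
      distNum (G.induce {u | u ≠ v}) ≤ 2 * distNum G :=
  ⟨Nat.sub_le_of_le_add G.distNum_le_distNum_induce_ne_add_one, G.distNum_induce_ne_le_two_mul⟩

theorem stmt0 {V : Type*} [Fintype V] (G : SimpleGraph V) (hc : G.Connected)
    (hn : 3 ≤ Fintype.card V) (v : V) :
    distNum G - 1 ≤ distNum (G.induce {u | u ≠ v}) ∧
      distNum (G.induce {u | u ≠ v}) ≤ 2 * distNum G :=
  stmt0_general G v
end

section
/- For every connected graph G and every edge e of G, |D(G − e) − D(G)| ≤ 2, where G − e is the graph obtained from G by deleting the edge e. -/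
/-!
Fixing the two ends `u, v` of `e` with two fresh labels, an automorphism of `G - e` that preserves
the labels fixes `e` and hence is an automorphism of `G`, and vice versa. So a distinguishing
labeling of either graph, extended by two new labels on `u` and `v`, distinguishes the other.
-/

open SimpleGraph

open Finset

namespace SimpleGraph

variable {V : Type*}

def IsDistinguishingLabeling {α : Type*} (G : SimpleGraph V) (f : V → α) : Prop :=
  ∀ φ : G ≃g G, (∀ x, f (φ x) = f x) → ∀ x, φ x = x

theorem IsDistinguishingLabeling.comp {α β : Type*} {G : SimpleGraph V} {f : V → α}
    (hf : G.IsDistinguishingLabeling f) {g : α → β} (hg : Function.Injective g) :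
    G.IsDistinguishingLabeling (g ∘ f) :=
  fun φ hφ => hf φ fun x => hg (hφ x)

theorem exists_isDistinguishingLabeling_fin_distNum [Finite V] (G : SimpleGraph V) :
    ∃ f : V → Fin (distNum G), G.IsDistinguishingLabeling f :=
  Nat.sInf_mem (s := {d | ∃ f : V → Fin d, G.IsDistinguishingLabeling f})
    ⟨Nat.card V, Finite.equivFin V, fun _ hφ x => (Finite.equivFin V).injective (hφ x)⟩

theorem distNum_le_card {α : Type*} [Fintype α] {G : SimpleGraph V} {f : V → α}
    (hf : G.IsDistinguishingLabeling f) : distNum G ≤ Fintype.card α :=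
  Nat.sInf_le ⟨_, hf.comp (Fintype.equivFin α).injective⟩

theorem IsDistinguishingLabeling.extend [DecidableEq V] {α : Type*} {G H : SimpleGraph V}
    {f : V → α} (hf : G.IsDistinguishingLabeling f) (S : Finset V)
    (hS : ∀ φ : H ≃g H, (∀ x ∈ S, φ x = x) → ∀ x y, G.Adj (φ x) (φ y) ↔ G.Adj x y) :
    H.IsDistinguishingLabeling
      (fun x => if h : x ∈ S then Sum.inr ⟨x, h⟩ else Sum.inl (f x) : V → α ⊕ S) := by
  intro φ hφ
  have hfix : ∀ x ∈ S, φ x = x := by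
    intro x hx
    have h := hφ x
    simp only [hx, dite_true] at h
    split_ifs at h
    exact congrArg Subtype.val (Sum.inr_injective h)
  let ψ : G ≃g G := ⟨φ.toEquiv, hS φ hfix _ _⟩
  refine hf ψ fun x => ?_
  by_cases hx : x ∈ S
  · exact congrArg f (hfix x hx)
  · have h := hφ x
    simp only [hx, dite_false] at h
    split_ifs at h
    exact Sum.inl_injective h

theorem distNum_le_distNum_add_card [Finite V] (G H : SimpleGraph V) (S : Finset V)
    (hS : ∀ φ : H ≃g H, (∀ x ∈ S, φ x = x) → ∀ x y, G.Adj (φ x) (φ y) ↔ G.Adj x y) :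
    distNum H ≤ distNum G + #S := by
  classical
  obtain ⟨f, hf⟩ := exists_isDistinguishingLabeling_fin_distNum G
  simpa using distNum_le_card (hf.extend S hS)

theorem forall_deleteEdges_singleton_adj_apply_iff (G : SimpleGraph V) {e : Sym2 V}
    {φ : V ≃ V} (he : Sym2.map φ e = e) :
    (∀ x y, (G.deleteEdges {e}).Adj (φ x) (φ y) ↔ (G.deleteEdges {e}).Adj x y) ↔
      ∀ x y, G.Adj (φ x) (φ y) ↔ G.Adj x y := by
  have hmap : ∀ x y, s(φ x, φ y) = e ↔ s(x, y) = e := fun x y => by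
    conv_rhs => rw [← (Sym2.map.injective φ.injective).eq_iff, he]
    rw [Sym2.map_mk]
  have hon : ∀ (K : SimpleGraph V) x y, s(x, y) = e → (K.Adj (φ x) (φ y) ↔ K.Adj x y) :=
    fun K x y h => by rw [← mem_edgeSet, ← mem_edgeSet, ← Sym2.map_mk, h, he]
  have hoff : ∀ x y, s(x, y) ≠ e →
      (((G.deleteEdges {e}).Adj (φ x) (φ y) ↔ (G.deleteEdges {e}).Adj x y) ↔
        (G.Adj (φ x) (φ y) ↔ G.Adj x y)) := fun x y h => by
    simp only [deleteEdges_adj, Set.mem_singleton_iff, hmap, h, not_false_eq_true, and_true]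
  refine forall₂_congr fun x y => ?_
  by_cases hxy : s(x, y) = e
  · exact iff_of_true (hon _ x y hxy) (hon _ x y hxy)
  · exact hoff x y hxy

end SimpleGraph

theorem stmt4_general {V : Type*} [Fintype V] (G : SimpleGraph V)
    (e : Sym2 V) :
    |(distNum (G.deleteEdges {e}) : ℤ) - (distNum G : ℤ)| ≤ 2 := by
  induction e using Sym2.ind with
  | _ u v =>
  classical
  have hfix : ∀ {H : SimpleGraph V} (φ : H ≃g H), (∀ x ∈ ({u, v} : Finset V), φ x = x) →
      Sym2.map φ s(u, v) = s(u, v) := fun φ h => by simp [h]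
  have hdel := distNum_le_distNum_add_card G (G.deleteEdges {s(u, v)}) {u, v} fun φ h =>
    (G.forall_deleteEdges_singleton_adj_apply_iff (hfix φ h)).mp fun _ _ => φ.map_rel_iff
  have hadd := distNum_le_distNum_add_card (G.deleteEdges {s(u, v)}) G {u, v} fun φ h =>
    (G.forall_deleteEdges_singleton_adj_apply_iff (hfix φ h)).mpr fun _ _ => φ.map_rel_iff
  have hcard : #{u, v} ≤ 2 := card_le_two
  rw [abs_sub_le_iff]
  omega

theorem stmt4 {V : Type*} [Fintype V] (G : SimpleGraph V) (hc : G.Connected)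
    (e : Sym2 V) (he : e ∈ G.edgeSet) :
    |(distNum (G.deleteEdges {e}) : ℤ) - (distNum G : ℤ)| ≤ 2 :=
  stmt4_general G e
end

section
/- Let G be a connected graph of order n and v a vertex of G. Then D'(G) − 1 ≤ D'(G ⊙ v), where G ⊙ v is the graph obtained from G by removing all edges between any pair of neighbors of v. -/
open SimpleGraph

/-! Give the edges of `G ⊙ v` a distinguishing colouring with `d` colours and the deleted edges a
fresh colour. An automorphism of `G` preserving this colouring preserves the set of deleted edges,
so it is an automorphism of `G ⊙ v` preserving the old colouring, hence the identity; thus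
`D'(G) ≤ D'(G ⊙ v) + 1`. What remains is the junk value `sInf ∅ = 0`: `G ⊙ v` is connected,
so colouring its edges pairwise differently is distinguishing unless there are exactly two
vertices, and then their transposition fixes every edge of `G`, so that `D'(G) = 0` as well. -/

namespace SimpleGraph

variable {V α : Type*} {G : SimpleGraph V}

def IsEdgeDistinguishing (G : SimpleGraph V) (f : Sym2 V → α) : Prop :=
  ∀ φ : G ≃g G, (∀ e ∈ G.edgeSet, f (Sym2.map φ e) = f e) → ∀ x : V, φ x = x

theorem odot_adj {v a b : V} :
    (G.odot v).Adj a b ↔ G.Adj a b ∧ ¬(G.Adj v a ∧ G.Adj v b) := by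
  simp [odot, Sym2.mem_iff, or_imp, forall_and]

theorem Preconnected.odot (hG : G.Preconnected) (v : V) : (G.odot v).Preconnected := by
  have hle : G.Reachable ≤ (G.odot v).Reachable := by
    rw [reachable_eq_reflTransGen, reachable_eq_reflTransGen]
    refine Relation.reflTransGen_closed fun a b hab => ?_
    rw [← reachable_iff_reflTransGen]
    by_cases hv : G.Adj v a ∧ G.Adj v b
    · have hva : (G.odot v).Adj v a := odot_adj.2 ⟨hv.1, fun h => G.loopless.irrefl v h.1⟩
      have hvb : (G.odot v).Adj v b := odot_adj.2 ⟨hv.2, fun h => G.loopless.irrefl v h.1⟩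
      exact hva.symm.reachable.trans hvb.reachable
    · exact (odot_adj.2 ⟨hab, hv⟩).reachable
  exact fun a b => hle a b (hG a b)

theorem Preconnected.forall_of_adj_closed (hG : G.Preconnected) {P : V → Prop}
    (hP : ∀ a b, G.Adj a b → P a → P b) {x : V} (hx : P x) (u : V) : P u := by
  have hxu := (reachable_iff_reflTransGen x u).1 (hG x u)
  induction hxu with
  | refl => exact hx
  | tail _ hab ih => exact hP _ _ hab ih

/- A moved vertex is sent to each of its neighbours, so it has just one, and `φ` swaps the two;
connectivity leaves room for no other vertex. -/
theorem Preconnected.eq_or_eq_of_forall_map_edge_eq (hG : G.Preconnected) (φ : G ≃g G)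
    (hφ : ∀ e ∈ G.edgeSet, Sym2.map φ e = e) {x : V} (hx : φ x ≠ x) (u : V) :
    u = x ∨ u = φ x := by
  have hnbr : ∀ a z, G.Adj a z → φ a ≠ a → φ a = z ∧ φ z = a := by
    intro a z haz ha
    have := hφ s(a, z) haz
    rw [Sym2.map_mk, Sym2.eq_iff] at this
    tauto
  suffices ∀ u, u = x ∨ (u = φ x ∧ φ u = x) from (this u).imp_right And.left
  refine hG.forall_of_adj_closed ?_ (Or.inl rfl)
  rintro a b hab (rfl | ⟨ha, hφa⟩)
  · obtain ⟨rfl, h⟩ := hnbr a b hab hx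
    exact Or.inr ⟨rfl, h⟩
  · have ha' : φ a ≠ a := by rw [hφa, ha]; exact hx.symm
    exact Or.inl ((hnbr a b hab ha').1.symm.trans hφa)

theorem IsEdgeDistinguishing.comp_injective {β : Type*} {f : Sym2 V → α} {i : α → β}
    (hf : G.IsEdgeDistinguishing f) (hi : i.Injective) : G.IsEdgeDistinguishing (i ∘ f) :=
  fun φ hφ => hf φ fun e he => hi (hφ e he)

theorem Preconnected.isEdgeDistinguishing_id (hG : G.Preconnected)
    (hV : ∀ x y : V, x ≠ y → ∃ u, u ≠ x ∧ u ≠ y) :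
    G.IsEdgeDistinguishing (id : Sym2 V → Sym2 V) := by
  intro φ hφ x
  by_contra hx
  obtain ⟨u, hux, huy⟩ := hV x (φ x) (Ne.symm hx)
  rcases hG.eq_or_eq_of_forall_map_edge_eq φ hφ hx u with h | h <;> contradiction

theorem not_isEdgeDistinguishing_of_forall_eq_or_eq {x y : V} (hxy : x ≠ y)
    (hV : ∀ u, u = x ∨ u = y) (f : Sym2 V → α) : ¬G.IsEdgeDistinguishing f := by
  classical
  have hfix : ∀ a b : V, a ≠ b → s(Equiv.swap x y a, Equiv.swap x y b) = s(a, b) := by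
    intro a b hab
    rcases hV a with rfl | rfl <;> rcases hV b with rfl | rfl <;> simp_all [Sym2.eq_swap]
  let σ : G ≃g G := ⟨Equiv.swap x y, fun {a b} => by
    obtain rfl | hab := eq_or_ne a b
    · simp
    · rw [← mem_edgeSet, ← mem_edgeSet]
      exact iff_of_eq (congrArg (· ∈ G.edgeSet) (hfix a b hab))⟩
  intro hf
  have := hf σ (fun e he => by
    induction e with
    | _ a b => exact congrArg f (by rw [Sym2.map_mk]; exact hfix a b (G.ne_of_adj he))) x
  exact hxy (by simpa [σ] using this.symm)

theorem IsEdgeDistinguishing.option_of_deleteEdges {s : Set (Sym2 V)} {f : Sym2 V → α}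
    [DecidablePred (· ∈ s)] (hf : (G.deleteEdges s).IsEdgeDistinguishing f) :
    G.IsEdgeDistinguishing fun e => if e ∈ s then none else some (f e) := by
  intro φ hφ
  simp only at hφ
  have hmem : ∀ e ∈ G.edgeSet, Sym2.map φ e ∈ s ↔ e ∈ s := by
    intro e he
    have := hφ e he
    split_ifs at this <;> simp_all
  let ψ : G.deleteEdges s ≃g G.deleteEdges s := ⟨φ.toEquiv, fun {a b} => by
    change (G.deleteEdges s).Adj (φ a) (φ b) ↔ _
    simp only [deleteEdges_adj, φ.map_rel_iff]
    refine and_congr_right fun hab => ?_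
    rw [← Sym2.map_mk, hmem _ hab]⟩
  refine hf ψ fun e he => ?_
  rw [edgeSet_deleteEdges] at he
  have := hφ e he.1
  rw [if_neg he.2, if_neg ((hmem e he.1).not.2 he.2)] at this
  exact Option.some_injective _ this

theorem distIdx_eq_sInf :
    distIdx G = sInf {d | ∃ f : Sym2 V → Fin d, G.IsEdgeDistinguishing f} :=
  rfl

theorem distIdx_le_card [Fintype α] {f : Sym2 V → α} (hf : G.IsEdgeDistinguishing f) :
    distIdx G ≤ Fintype.card α := by
  rw [distIdx_eq_sInf]
  exact Nat.sInf_le ⟨_, hf.comp_injective (Fintype.equivFin α).injective⟩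

theorem exists_isEdgeDistinguishing_fin_distIdx [Fintype α] {f : Sym2 V → α}
    (hf : G.IsEdgeDistinguishing f) :
    ∃ g : Sym2 V → Fin (distIdx G), G.IsEdgeDistinguishing g := by
  have hne : {d | ∃ g : Sym2 V → Fin d, G.IsEdgeDistinguishing g}.Nonempty :=
    ⟨_, _, hf.comp_injective (Fintype.equivFin α).injective⟩
  exact distIdx_eq_sInf (G := G) ▸ Nat.sInf_mem hne

theorem distIdx_eq_zero_of_forall_eq_or_eq {x y : V} (hxy : x ≠ y) (hV : ∀ u, u = x ∨ u = y) :
    distIdx G = 0 := by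
  rw [distIdx_eq_sInf, Nat.sInf_eq_zero]
  exact Or.inr <| Set.eq_empty_of_forall_notMem fun _ ⟨f, hf⟩ =>
    not_isEdgeDistinguishing_of_forall_eq_or_eq hxy hV f hf

end SimpleGraph

theorem stmt9 {V : Type*} [Fintype V] (G : SimpleGraph V) (hc : G.Connected) (v : V) :
    distIdx G - 1 ≤ distIdx (G.odot v) := by
  classical
  by_cases hV : ∃ x y : V, x ≠ y ∧ ∀ u, u = x ∨ u = y
  · obtain ⟨x, y, hxy, hV⟩ := hV
    simp [distIdx_eq_zero_of_forall_eq_or_eq (G := G) hxy hV]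
  push Not at hV
  obtain ⟨f, hf⟩ := exists_isEdgeDistinguishing_fin_distIdx
    ((hc.preconnected.odot v).isEdgeDistinguishing_id hV)
  have := distIdx_le_card (IsEdgeDistinguishing.option_of_deleteEdges (G := G) hf)
  simp only [Fintype.card_option, Fintype.card_fin] at this
  omega
end

section
/- Let v be the central vertex of the star K_{1,n} with n ≥ 6. Then G ∘ v = K_n and D'(G ∘ v)/D'(G) = 2/n; hence the ratio D'(G ∘ v)/D'(G) can be made arbitrarily small. -/
open SimpleGraph

/-!
In `K_{1,n}` two leaves whose edges have the same colour can be swapped, while colouring the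
edges injectively forces an automorphism to fix every edge, hence (for `n ≥ 2`) every vertex:
so `D'(K_{1,n}) = n`. Contracting the centre gives `K_n`. A 2-colouring of `K_n` is
distinguishing exactly when its first colour class is an asymmetric graph, and the path
`0 - 1 - ⋯ - (n-1)` with the chord `1 - 3` is asymmetric for `n ≥ 6`: an automorphism fixes `0`,
the only leaf next to a vertex of degree 3, then `1`, then `2` (of degree 2, unlike `3`), and
then each further vertex as the only unfixed neighbour of its predecessor. Hence
`D'(K_{1,n} ∘ v) / D'(K_{1,n}) = 2 / n`.
-/

namespace SimpleGraph

variable {V W : Type*}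

def IsDistinguishingEdgeColoring {α : Type*} (G : SimpleGraph V) (f : Sym2 V → α) : Prop :=
  ∀ φ : G ≃g G, (∀ e ∈ G.edgeSet, f (Sym2.map φ e) = f e) → ∀ x : V, φ x = x

lemma distIdx_le {G : SimpleGraph V} {d : ℕ} {f : Sym2 V → Fin d}
    (hf : G.IsDistinguishingEdgeColoring f) : distIdx G ≤ d :=
  Nat.sInf_le ⟨f, hf⟩

lemma distIdx_eq {G : SimpleGraph V} {d : ℕ} {f : Sym2 V → Fin d}
    (hf : G.IsDistinguishingEdgeColoring f)
    (hmin : ∀ c < d, ∀ g : Sym2 V → Fin c, ¬ G.IsDistinguishingEdgeColoring g) :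
    distIdx G = d :=
  (distIdx_le hf).antisymm <| le_csInf ⟨d, f, hf⟩ fun c ⟨g, hg⟩ =>
    not_lt.1 fun hc => hmin c hc g hg

lemma IsDistinguishingEdgeColoring.comp_iso {α : Type*} {G : SimpleGraph V} {H : SimpleGraph W}
    {f : Sym2 W → α} (hf : H.IsDistinguishingEdgeColoring f) (e : G ≃g H) :
    G.IsDistinguishingEdgeColoring (f ∘ Sym2.map e) := by
  intro φ hφ x
  let ψ : H ≃g H := (e.symm.trans φ).trans e
  have hψ : ∀ s ∈ H.edgeSet, f (Sym2.map ψ s) = f s := by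
    intro s hs
    have h := hφ (Sym2.map e.symm s) ((Iso.map_mem_edgeSet_iff e.symm).mpr hs)
    simp only [Function.comp_apply, Sym2.map_map] at h
    convert h using 2 <;> ext <;> simp [ψ]
  simpa [ψ] using hf ψ hψ (e x)

lemma distIdx_congr {G : SimpleGraph V} {H : SimpleGraph W} (e : G ≃g H) :
    distIdx G = distIdx H := by
  unfold distIdx
  congr 1
  ext d
  exact ⟨fun ⟨f, hf⟩ => ⟨f ∘ Sym2.map e.symm, IsDistinguishingEdgeColoring.comp_iso hf e.symm⟩,
    fun ⟨f, hf⟩ => ⟨f ∘ Sym2.map e, IsDistinguishingEdgeColoring.comp_iso hf e⟩⟩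

lemma isDistinguishingEdgeColoring_top_of_asymmetric (R : SimpleGraph V)
    [DecidableRel R.Adj] (hR : ∀ φ : R ≃g R, ∀ x, φ x = x) :
    (⊤ : SimpleGraph V).IsDistinguishingEdgeColoring
      (fun e => if e ∈ R.edgeSet then (0 : Fin 2) else 1) := by
  intro φ hφ
  refine hR ⟨φ.toEquiv, fun {a b} => ?_⟩
  rcases eq_or_ne a b with rfl | hab
  · simp
  · have h := hφ s(a, b) hab
    simp only [Sym2.map_mk, mem_edgeSet] at h
    split_ifs at h <;> simp_all

lemma distIdx_top_of_asymmetric [Nontrivial V] (R : SimpleGraph V)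
    (hR : ∀ φ : R ≃g R, ∀ x, φ x = x) : distIdx (⊤ : SimpleGraph V) = 2 := by
  classical
  refine distIdx_eq (isDistinguishingEdgeColoring_top_of_asymmetric R hR) fun c hc g hg => ?_
  have : Subsingleton (Fin c) := Fin.subsingleton_iff_le_one.mpr (by omega)
  obtain ⟨a, b, hab⟩ := exists_pair_ne V
  have : Equiv.swap a b a = a :=
    hg (Iso.completeGraph (Equiv.swap a b)) (fun _ _ => Subsingleton.elim _ _) a
  rw [Equiv.swap_apply_left] at this
  exact hab this.symm

lemma Iso.apply_eq_self_of_unique_adj_notMem {G : SimpleGraph V} (φ : G ≃g G) {S : Set V}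
    (hS : ∀ z ∈ S, φ z = z) {x y : V} (hx : x ∈ S) (hxy : G.Adj x y)
    (hy : ∀ z ∉ S, G.Adj x z → z = y) : φ y = y := by
  by_cases h : φ y ∈ S
  · exact φ.injective (hS _ h)
  · exact hy _ h (by simpa [hS x hx] using φ.map_adj_iff.mpr hxy)

def chordedPath (n : ℕ) : SimpleGraph (Fin n) where
  Adj a b := a.1 + 1 = b.1 ∨ b.1 + 1 = a.1 ∨ (a.1 = 1 ∧ b.1 = 3) ∨ (a.1 = 3 ∧ b.1 = 1)
  symm := ⟨fun _ _ h => by omega⟩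
  loopless := ⟨fun _ h => by omega⟩

namespace chordedPath

variable {n : ℕ}

lemma adj_iff {a b : Fin n} : (chordedPath n).Adj a b ↔
    a.1 + 1 = b.1 ∨ b.1 + 1 = a.1 ∨ (a.1 = 1 ∧ b.1 = 3) ∨ (a.1 = 3 ∧ b.1 = 1) :=
  Iff.rfl

instance : DecidableRel (chordedPath n).Adj := fun _ _ => decidable_of_iff' _ adj_iff

variable {x : Fin n}

lemma degree_le_one (hn : 1 < n) (hx : x.1 = 0) : (chordedPath n).degree x ≤ 1 := by
  rw [← card_neighborFinset_eq_degree]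
  refine (Finset.card_le_card (t := {⟨1, hn⟩}) fun z hz => ?_).trans (Finset.card_singleton _).le
  simp [adj_iff, Fin.ext_iff] at hz ⊢
  omega

lemma two_le_degree (h0 : 0 < x.1) (hx : x.1 + 1 < n) : 2 ≤ (chordedPath n).degree x := by
  rw [← card_neighborFinset_eq_degree]
  refine le_of_eq_of_le ?_ (Finset.card_le_card (s := {⟨x.1 - 1, by omega⟩, ⟨x.1 + 1, hx⟩})
    fun z hz => ?_)
  · exact (Finset.card_pair (by simp only [Ne, Fin.mk.injEq]; omega)).symm
  · simp [adj_iff, Fin.ext_iff] at hz ⊢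
    omega

lemma degree_le_two (h0 : 0 < x.1) (hx : x.1 + 1 < n) (h1 : x.1 ≠ 1) (h3 : x.1 ≠ 3) :
    (chordedPath n).degree x ≤ 2 := by
  rw [← card_neighborFinset_eq_degree]
  refine (Finset.card_le_card (t := {⟨x.1 - 1, by omega⟩, ⟨x.1 + 1, hx⟩}) fun z hz => ?_).trans
    Finset.card_le_two
  simp [adj_iff, Fin.ext_iff] at hz ⊢
  omega

lemma three_le_degree (hn : 5 ≤ n) (hx : x.1 = 1 ∨ x.1 = 3) : 3 ≤ (chordedPath n).degree x := by
  rw [← card_neighborFinset_eq_degree]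
  refine le_of_eq_of_le ?_ (Finset.card_le_card
    (s := {⟨x.1 - 1, by omega⟩, ⟨x.1 + 1, by omega⟩, ⟨4 - x.1, by omega⟩}) fun z hz => ?_)
  · exact (Finset.card_eq_three.mpr ⟨_, _, _, by simp only [Ne, Fin.mk.injEq]; omega,
      by simp only [Ne, Fin.mk.injEq]; omega, by simp only [Ne, Fin.mk.injEq]; omega, rfl⟩).symm
  · simp [adj_iff, Fin.ext_iff] at hz ⊢
    omega

lemma iso_apply_eq_self_of_val_eq_zero (hn : 6 ≤ n) (φ : chordedPath n ≃g chordedPath n)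
    (hx : x.1 = 0) : φ x = x := by
  have hφx : (chordedPath n).degree (φ x) ≤ 1 :=
    (φ.degree_eq x).trans_le (degree_le_one (by omega) hx)
  have hend : (φ x).1 = 0 ∨ (φ x).1 = n - 1 := by
    by_contra h
    have := two_le_degree (x := φ x) (by omega) (by omega)
    omega
  refine Fin.ext ((hend.resolve_right fun hlast => ?_).trans hx.symm)
  -- otherwise `φ` maps the neighbour `1` of `0`, of degree 3, to `n - 2`, of degree 2
  let y : Fin n := ⟨1, by omega⟩
  have hadj : (chordedPath n).Adj (φ x) (φ y) := φ.map_adj_iff.mpr (by simp [adj_iff, y, hx])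
  have hy : (φ y).1 = n - 2 := by rw [adj_iff] at hadj; omega
  have h2 := degree_le_two (x := φ y) (by omega) (by omega) (by omega) (by omega)
  have h3 := three_le_degree (x := y) (by omega) (Or.inl rfl)
  rw [φ.degree_eq] at h2
  omega

lemma iso_apply_eq_self_of_val_eq_two (hn : 6 ≤ n) (φ : chordedPath n ≃g chordedPath n)
    (h0 : ∀ x : Fin n, x.1 = 0 → φ x = x) (h1 : ∀ x : Fin n, x.1 = 1 → φ x = x)
    (hx : x.1 = 2) : φ x = x := by
  let y : Fin n := ⟨1, by omega⟩
  let z : Fin n := ⟨0, by omega⟩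
  have hadj : (chordedPath n).Adj y (φ x) := by
    simpa [h1 y rfl] using φ.map_adj_iff.mpr (by simp [adj_iff, y, hx] : (chordedPath n).Adj y x)
  have hz : φ x ≠ z := by
    rw [← h0 z rfl]
    exact φ.injective.ne (by simp [Fin.ext_iff, z, hx])
  have hx3 : (φ x).1 ≠ 3 := fun h => by
    have h2 := degree_le_two (x := x) (by omega) (by omega) (by omega) (by omega)
    have h3 := three_le_degree (x := φ x) (by omega) (Or.inr h)
    rw [φ.degree_eq] at h3
    omega
  rw [adj_iff] at hadj
  rw [Ne, Fin.ext_iff] at hz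
  exact Fin.ext (by simp only [y, z] at hadj hz; omega)

theorem iso_apply_eq_self (hn : 6 ≤ n) (φ : chordedPath n ≃g chordedPath n) (x : Fin n) :
    φ x = x := by
  suffices ∀ k (x : Fin n), x.1 = k → φ x = x from this _ x rfl
  intro k
  induction k using Nat.strong_induction_on with
  | _ k ih =>
  intro x hx
  obtain rfl | rfl | ⟨hk0, hk2⟩ : k = 0 ∨ k = 2 ∨ (k ≠ 0 ∧ k ≠ 2) := by omega
  · exact iso_apply_eq_self_of_val_eq_zero hn φ hx
  · exact iso_apply_eq_self_of_val_eq_two hn φ (ih 0 (by omega)) (ih 1 (by omega)) hx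
  -- `k` is the only neighbour of `k - 1` not below `k`
  refine φ.apply_eq_self_of_unique_adj_notMem (S := {z | z.1 < k}) (fun z hz => ih z.1 hz z rfl)
    (x := ⟨k - 1, by omega⟩) (by simp; omega) (by simp [adj_iff]; omega) fun z hz hadj => ?_
  simp only [Set.mem_ofPred_eq, not_lt, adj_iff] at hz hadj
  exact Fin.ext (by omega)

end chordedPath

lemma distIdx_top_eq_two {V : Type*} [Fintype V] (hV : 6 ≤ Fintype.card V) :
    distIdx (⊤ : SimpleGraph V) = 2 := by
  have : Nontrivial (Fin (Fintype.card V)) := Fin.nontrivial_iff_two_le.mpr (by omega)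
  rw [distIdx_congr (Iso.completeGraph (Fintype.equivFin V))]
  exact distIdx_top_of_asymmetric _ (chordedPath.iso_apply_eq_self hV)

end SimpleGraph

section Star

variable {n : ℕ}

lemma mem_edgeSet_starG {e : Sym2 (Fin 1 ⊕ Fin n)} :
    e ∈ (starG n).edgeSet ↔ ∃ j, e = s(Sum.inl 0, Sum.inr j) := by
  induction e using Sym2.ind with
  | _ a b =>
    rcases a with i | j <;> rcases b with i' | j' <;>
      simp [starG, Fin.eq_zero, Sym2.eq_swap]

lemma starG_vContract : (starG n).vContract (Sum.inl 0) = ⊤ := by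
  ext ⟨x, hx⟩ ⟨y, hy⟩
  rcases x with i | x
  · exact absurd (by rw [Fin.eq_zero i]) hx
  rcases y with i | y
  · exact absurd (by rw [Fin.eq_zero i]) hy
  simp [vContract, starG]

lemma isDistinguishingEdgeColoring_starG (hn : 2 ≤ n) {f : Sym2 (Fin 1 ⊕ Fin n) → Fin n}
    (hf : ∀ j, f s(Sum.inl 0, Sum.inr j) = j) : (starG n).IsDistinguishingEdgeColoring f := by
  intro φ hφ
  have hfix : ∀ j, s(φ (Sum.inl 0), φ (Sum.inr j)) = s(Sum.inl 0, Sum.inr j) := by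
    intro j
    have he : s(Sum.inl 0, Sum.inr j) ∈ (starG n).edgeSet := mem_edgeSet_starG.mpr ⟨j, rfl⟩
    obtain ⟨k, hk⟩ := mem_edgeSet_starG.mp (φ.map_mem_edgeSet_iff.mpr he)
    have hkj := hφ _ he
    rw [hk, hf, hf] at hkj
    rw [← Sym2.map_mk, hk, hkj]
  have hc : φ (Sum.inl 0) = Sum.inl 0 := by
    have h0 := hfix ⟨0, by omega⟩
    have h1 := hfix ⟨1, by omega⟩
    by_contra hne
    simp only [Sym2.eq_iff, hne, false_and, false_or] at h0 h1
    simpa using h0.1.symm.trans h1.1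
  rintro (i | j)
  · rw [Fin.eq_zero i]; exact hc
  · simpa [hc] using hfix j

lemma not_isDistinguishingEdgeColoring_starG {d : ℕ} (hd : d < n)
    (g : Sym2 (Fin 1 ⊕ Fin n) → Fin d) : ¬ (starG n).IsDistinguishingEdgeColoring g := by
  intro hg
  obtain ⟨i, j, hij, hgij⟩ := Fintype.exists_ne_map_eq_of_card_lt
    (fun j : Fin n => g s(Sum.inl 0, Sum.inr j)) (by simpa using hd)
  have hswap : ∀ k, g s(Sum.inl 0, Sum.inr (Equiv.swap i j k)) = g s(Sum.inl 0, Sum.inr k) := by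
    intro k
    rcases eq_or_ne k i with rfl | hki
    · simpa using hgij.symm
    rcases eq_or_ne k j with rfl | hkj
    · simpa using hgij
    · rw [Equiv.swap_apply_of_ne_of_ne hki hkj]
  let φ : starG n ≃g starG n := completeBipartiteGraphCongr (Equiv.refl _) (Equiv.swap i j)
  have hφ₀ : φ (Sum.inl 0) = Sum.inl 0 := rfl
  have hφ : ∀ k, φ (Sum.inr k) = Sum.inr (Equiv.swap i j k) := fun _ => rfl
  have := hg φ (fun e he => by
    obtain ⟨k, rfl⟩ := mem_edgeSet_starG.mp he
    simpa [hφ₀, hφ] using hswap k) (Sum.inr i)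
  simp [hφ, hij.symm] at this

lemma distIdx_starG (hn : 2 ≤ n) : distIdx (starG n) = n := by
  classical
  let f : Sym2 (Fin 1 ⊕ Fin n) → Fin n := fun e =>
    if h : ∃ j, Sum.inr j ∈ e then h.choose else ⟨0, by omega⟩
  have hf : ∀ j, f s(Sum.inl 0, Sum.inr j) = j := fun j => by simp [f]
  exact distIdx_eq (isDistinguishingEdgeColoring_starG hn hf)
    fun _ hd g => not_isDistinguishingEdgeColoring_starG hd g

lemma distIdx_starG_vContract (hn : 6 ≤ n) :
    distIdx ((starG n).vContract (Sum.inl 0)) = 2 := by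
  rw [starG_vContract]
  exact distIdx_top_eq_two (by simpa using hn)

end Star

theorem stmt16 :
    (∀ n : ℕ, 6 ≤ n →
      (starG n).vContract (Sum.inl 0) = ⊤ ∧
      (distIdx ((starG n).vContract (Sum.inl 0)) : ℝ) / (distIdx (starG n) : ℝ)
        = 2 / n) ∧
    (∀ ε : ℝ, 0 < ε → ∃ (V : Type) (_ : Fintype V) (G : SimpleGraph V) (v : V),
      (distIdx (G.vContract v) : ℝ) / (distIdx G : ℝ) < ε) := by
  have hratio : ∀ n : ℕ, 6 ≤ n →
      (distIdx ((starG n).vContract (Sum.inl 0)) : ℝ) / (distIdx (starG n) : ℝ) = 2 / n :=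
    fun n hn => by rw [distIdx_starG_vContract hn, distIdx_starG (by omega)]; norm_num
  refine ⟨fun n hn => ⟨starG_vContract, hratio n hn⟩, fun ε hε => ?_⟩
  obtain ⟨m, hm⟩ := exists_nat_gt (2 / ε)
  refine ⟨_, inferInstance, starG (max m 6), Sum.inl 0, ?_⟩
  have hmax : (m : ℝ) ≤ (max m 6 : ℕ) := by exact_mod_cast le_max_left m 6
  rw [hratio _ (le_max_right m 6), div_lt_iff₀ (by positivity)]
  rw [div_lt_iff₀ hε] at hm
  nlinarith
end
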